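/- Let Z be a closed subspace of a complex Hilbert space H. Then the set G^Z := {P : P is an orthogonal projection on H and range(P) ∔ Z = H} is open in the set of all orthogonal projections on H, where the set of orthogonal projections carries the topology inherited from the operator norm on B(H). -/

import Mathlib

/-- `P` is an orthogonal projection: idempotent and self-adjoint. -/
def IsOrthProjection {H : Type*} [NormedAddCommGroup H] [InnerProductSpace ℂ H]
    [CompleteSpace H] (P : H →L[ℂ] H) : Prop :=
  P ∘L P = P ∧ IsSelfAdjoint P

/-! With `Q` the orthogonal projection onto `Z`, an orthogonal projection `P` satisfies
`range P ∔ Z = H` exactly when `P - Q` is invertible (Buckholtz). Hence `G^Z` is the preimage of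
the open group of units of `B(H)` under the continuous map `P ↦ P - Q`. -/

/-- The inverse is `e + star e - 1`: it is a right inverse, hence a two-sided one since it and
`p - q` are self-adjoint. -/
theorem isUnit_sub_of_mul_sub_eq {R : Type*} [Ring R] [StarRing R] {p q e : R}
    (hp : IsSelfAdjoint p) (hq : IsSelfAdjoint q)
    (he_left : e * (p - q) = p) (he_right : (p - q) * e = 1 - q) : IsUnit (p - q) := by
  have hd : IsSelfAdjoint (p - q) := hp.sub hq
  have hstar : (p - q) * star e = p := by
    simpa only [star_mul, hd.star_eq, hp.star_eq] using congrArg star he_left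
  have hright : (p - q) * (e + star e - 1) = 1 := by
    rw [mul_sub, mul_add, he_right, hstar, mul_one]
    abel
  have hleft : (e + star e - 1) * (p - q) = 1 := by
    simpa only [star_mul, hd.star_eq, star_sub, star_add, star_star, star_one, add_comm (star e)]
      using congrArg star hright
  exact ⟨⟨p - q, e + star e - 1, hright, hleft⟩, rfl⟩

theorem LinearMap.isCompl_range_of_isUnit_sub {R M : Type*} [Ring R] [AddCommGroup M]
    [Module R M] {p q : M →ₗ[R] M} (hp : IsIdempotentElem p) (hq : IsIdempotentElem q)
    (h : IsUnit (p - q)) : IsCompl (range p) (range q) := by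
  obtain ⟨u, hu⟩ := h
  constructor
  · rw [Submodule.disjoint_def]
    intro x hxp hxq
    have hx : (p - q) x = 0 := by
      rw [sub_apply, (IsIdempotentElem.mem_range_iff hp).mp hxp,
        (IsIdempotentElem.mem_range_iff hq).mp hxq, sub_self]
    simpa [← hu, ← Module.End.mul_apply] using congrArg (↑u⁻¹ : M →ₗ[R] M) hx
  · rw [codisjoint_iff, eq_top_iff]
    intro y _
    have hy : (p - q) ((↑u⁻¹ : M →ₗ[R] M) y) = y := by
      rw [← hu, ← Module.End.mul_apply, u.mul_inv, Module.End.one_apply]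
    rw [← hy, sub_apply]
    exact Submodule.sub_mem_sup (mem_range_self p _) (mem_range_self q _)

namespace ContinuousLinearMap

variable {𝕜 E : Type*} [RCLike 𝕜] [NormedAddCommGroup E] [InnerProductSpace 𝕜 E]
  [CompleteSpace E] {p q : E →L[𝕜] E}

/-- The projection `e` onto `range p` along `range q` (continuous, both ranges being closed)
satisfies `e * (p - q) = p` and `(p - q) * e = 1 - q`. -/
theorem isUnit_sub_of_isCompl_range (hp : IsStarProjection p) (hq : IsStarProjection q)
    (h : IsCompl p.range q.range) : IsUnit (p - q) := by
  have ht : Submodule.IsTopCompl p.range q.range :=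
    Submodule.IsCompl.isTopCompl_of_isClosed h
      (IsIdempotentElem.isClosed_range hp.isIdempotentElem)
      (IsIdempotentElem.isClosed_range hq.isIdempotentElem)
  set e := p.range.projectionL q.range ht
  refine isUnit_sub_of_mul_sub_eq (e := e) hp.isSelfAdjoint hq.isSelfAdjoint ?_ ?_
  · ext x
    change e (p x - q x) = p x
    rw [map_sub, Submodule.projectionL_apply_right ht ⟨q x, LinearMap.mem_range_self _ x⟩,
      sub_zero]
    exact Submodule.projectionL_apply_left ht ⟨p x, LinearMap.mem_range_self _ x⟩
  · ext x
    change p (e x) - q (e x) = x - q x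
    have hpe : p (e x) = e x :=
      (LinearMap.IsIdempotentElem.mem_range_iff
        (IsIdempotentElem.toLinearMap hp.isIdempotentElem)).mp
        (Submodule.projectionL_apply_mem ht x)
    have hqe : q (x - e x) = x - e x := by
      rw [← Submodule.projectionL_eq_self_sub_projectionL ht]
      exact (LinearMap.IsIdempotentElem.mem_range_iff
        (IsIdempotentElem.toLinearMap hq.isIdempotentElem)).mp (Submodule.projectionL_apply_mem _ x)
    rw [map_sub, sub_eq_sub_iff_add_eq_add] at hqe
    rw [hpe, sub_eq_sub_iff_add_eq_add, ← hqe, add_comm]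

theorem isCompl_range_iff_isUnit_sub (hp : IsStarProjection p) (hq : IsStarProjection q) :
    IsCompl p.range q.range ↔ IsUnit (p - q) := by
  refine ⟨isUnit_sub_of_isCompl_range hp hq, fun h ↦ ?_⟩
  refine LinearMap.isCompl_range_of_isUnit_sub (IsIdempotentElem.toLinearMap hp.isIdempotentElem)
    (IsIdempotentElem.toLinearMap hq.isIdempotentElem) ?_
  simpa using h.map toLinearMapRingHom

end ContinuousLinearMap

theorem isOpen_complementary_projections {H : Type*} [NormedAddCommGroup H]
    [InnerProductSpace ℂ H] [CompleteSpace H]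
    (Z : Submodule ℂ H) (hZ : IsClosed (Z : Set H)) :
    IsOpen {P : {T : H →L[ℂ] H // IsOrthProjection T} |
      IsCompl (LinearMap.range ((P : H →L[ℂ] H) : H →ₗ[ℂ] H)) Z} := by
  have : CompleteSpace Z := hZ.completeSpace_coe
  have hset : {P : {T : H →L[ℂ] H // IsOrthProjection T} |
      IsCompl (LinearMap.range ((P : H →L[ℂ] H) : H →ₗ[ℂ] H)) Z} =
      (fun P : {T : H →L[ℂ] H // IsOrthProjection T} ↦ (P : H →L[ℂ] H) - Z.starProjection) ⁻¹'
        {T | IsUnit T} := by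
    ext ⟨P, hP_idem, hP_sa⟩
    have := ContinuousLinearMap.isCompl_range_iff_isUnit_sub ⟨hP_idem, hP_sa⟩
      (isStarProjection_starProjection (U := Z))
    rwa [Submodule.range_starProjection] at this
  rw [hset]
  exact Units.isOpen.preimage (by fun_prop)
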